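/- Let A be a K×K left-stochastic, strongly connected matrix with Perron vector π, let (A_n)_{n≥1} be i.i.d. random left-stochastic 0/1-valued matrices with E[A_n] = A, fix α ∈ [0,1), ᾱ = 1−α, and define w_0 = e_k, w_n = (αI + ᾱA_n) w_{n−1}. Suppose C > 0 and ρ ∈ (0,1) are such that ‖(αI + ᾱA)^j (w − π)‖ ≤ C ρ^j for every probability vector w and every j ≥ 0. Then for all m ≤ n, E[ ⟨ w_m − π, w_n − π ⟩ ] ≤ 2 C ρ^{n−m}, where ⟨·,·⟩ is the Euclidean inner product. -/

import Mathlib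

/-!
Write `B = αI + (1 - α)A` and let `F = B_n ⋯ B_{m+1}` be the product of the random lazy
updates after time `m`, so that `w_n = F w_m`. The factors of `F` are independent of each other
and of `w_m`, hence `E F = B^(n-m)` and
`E⟨w_m - π, F w_m - π⟩ = E⟨w_m - π, B^(n-m) w_m - π⟩ = E⟨w_m - π, B^(n-m) (w_m - π)⟩`
since `Bπ = π`. Cauchy–Schwarz, `‖w_m - π‖ ≤ 2` and the mixing bound give `2Cρ^(n-m)`.
-/

open MeasureTheory ProbabilityTheory Filter Topology

variable {K : ℕ}

/-- Left-stochastic matrix (entry `M ℓ k` in row `ℓ`, column `k`): nonnegative entries,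
columns summing to 1. -/
def LeftStochastic (M : Fin K → Fin K → ℝ) : Prop :=
  (∀ l k, 0 ≤ M l k) ∧ ∀ k, ∑ l, M l k = 1

/-- A 0/1-valued matrix. -/
def ZeroOne (M : Fin K → Fin K → ℝ) : Prop := ∀ l k, M l k = 0 ∨ M l k = 1

/-- Strong connectivity: positive-weight path between every ordered pair of vertices,
and at least one positive diagonal entry. -/
def StronglyConnected (M : Fin K → Fin K → ℝ) : Prop :=
  (∀ k l : Fin K, ∃ m : ℕ, 0 < ((Matrix.of M) ^ (m + 1)) l k) ∧ ∃ k, 0 < M k k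

/-- The update map `v ↦ (α I + (1-α) M) v`. -/
def upd (α : ℝ) (M : Fin K → Fin K → ℝ) (v : Fin K → ℝ) : Fin K → ℝ :=
  fun j => α * v j + (1 - α) * ∑ l, M j l * v l

/-- Euclidean norm of a vector in `ℝ^K`. -/
noncomputable def enorm' (v : Fin K → ℝ) : ℝ := Real.sqrt (∑ j, v j ^ 2)

open Matrix

section Integrability

variable {Ω : Type*} {mΩ : MeasurableSpace Ω} {P : Measure Ω}

lemma integrable_of_abs_le_one [IsFiniteMeasure P] {f : Ω → ℝ} (hf : Measurable f)
    (h : ∀ ω, |f ω| ≤ 1) : Integrable f P :=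
  .of_bound hf.aestronglyMeasurable 1 (ae_of_all _ h)

lemma integrable_mul_of_abs_le_one [IsFiniteMeasure P] {f g : Ω → ℝ} (hf : Measurable f)
    (hg : Measurable g) (hf1 : ∀ ω, |f ω| ≤ 1) (hg1 : ∀ ω, |g ω| ≤ 1) :
    Integrable (fun ω => f ω * g ω) P :=
  integrable_of_abs_le_one (hf.mul hg) fun ω => by
    rw [abs_mul]; exact mul_le_one₀ (hf1 ω) (abs_nonneg _) (hg1 ω)

lemma integrable_apply_of_mem_colStochastic [IsFiniteMeasure P] {ι : Type*} [Fintype ι]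
    [DecidableEq ι] {X : Ω → Matrix ι ι ℝ} (hX : ∀ ω, X ω ∈ colStochastic ℝ ι) {j l : ι}
    (hm : Measurable fun ω => X ω j l) : Integrable (fun ω => X ω j l) P :=
  integrable_of_abs_le_one hm fun ω =>
    abs_le.2 ⟨by linarith [nonneg_of_mem_colStochastic (hX ω) (i := j) (j := l)],
      le_one_of_mem_colStochastic (hX ω)⟩

lemma integral_le_of_abs_le [IsProbabilityMeasure P] {f : Ω → ℝ}
    (hf : AEStronglyMeasurable f P) {c : ℝ} (h : ∀ ω, |f ω| ≤ c) : ∫ ω, f ω ∂P ≤ c := by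
  calc ∫ ω, f ω ∂P ≤ ∫ _, c ∂P :=
        integral_mono (.of_bound hf c (ae_of_all _ h)) (integrable_const c)
          fun ω => (le_abs_self _).trans (h ω)
    _ = c := by simp

lemma integrable_dotProduct_of_abs_le_one [IsFiniteMeasure P] {ι : Type*} [Fintype ι]
    {u v : Ω → ι → ℝ} (hu : ∀ j, Measurable fun ω => u ω j) (hv : ∀ j, Measurable fun ω => v ω j)
    (hu1 : ∀ ω j, |u ω j| ≤ 1) (hv1 : ∀ ω j, |v ω j| ≤ 1) :
    Integrable (fun ω => u ω ⬝ᵥ v ω) P :=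
  integrable_finsetSum _ fun j _ =>
    integrable_mul_of_abs_le_one (hu j) (hv j) (fun ω => hu1 ω j) (fun ω => hv1 ω j)

end Integrability

section Independence

variable {Ω ι : Type*} [Fintype ι] {mΩ : MeasurableSpace Ω} {P : Measure Ω}
  {m₁ m₂ : MeasurableSpace Ω}

lemma integral_sum_mul_of_indep (hle₁ : m₁ ≤ mΩ) (hle₂ : m₂ ≤ mΩ) (hind : Indep m₁ m₂ P)
    {f g : ι → Ω → ℝ} (hf : ∀ i, Measurable[m₁] (f i)) (hg : ∀ i, Measurable[m₂] (g i))
    (hfi : ∀ i, Integrable (f i) P) (hgi : ∀ i, Integrable (g i) P) :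
    ∫ ω, ∑ i, f i ω * g i ω ∂P = ∑ i, (∫ ω, f i ω ∂P) * ∫ ω, g i ω ∂P := by
  have hfg : ∀ i, IndepFun (f i) (g i) P := fun i =>
    indep_of_indep_of_le_right (indep_of_indep_of_le_left hind (hf i).comap_le) (hg i).comap_le
  have hint : ∀ i, Integrable (fun ω => f i ω * g i ω) P := fun i =>
    (hfg i).integrable_mul (hfi i) (hgi i)
  rw [integral_finsetSum _ fun i _ => hint i]
  exact Finset.sum_congr rfl fun i _ => (hfg i).integral_mul_eq_mul_integral
    ((hf i).mono hle₁ le_rfl).aestronglyMeasurable ((hg i).mono hle₂ le_rfl).aestronglyMeasurable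

noncomputable def meanMatrix (P : Measure Ω) (X : Ω → Matrix ι ι ℝ) : Matrix ι ι ℝ :=
  Matrix.of fun j l => ∫ ω, X ω j l ∂P

lemma meanMatrix_mul_of_indep (hle₁ : m₁ ≤ mΩ) (hle₂ : m₂ ≤ mΩ) (hind : Indep m₁ m₂ P)
    {X Y : Ω → Matrix ι ι ℝ} (hX : ∀ j l, Measurable[m₁] fun ω => X ω j l)
    (hY : ∀ j l, Measurable[m₂] fun ω => Y ω j l)
    (hXi : ∀ j l, Integrable (fun ω => X ω j l) P)
    (hYi : ∀ j l, Integrable (fun ω => Y ω j l) P) :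
    meanMatrix P (X * Y) = meanMatrix P X * meanMatrix P Y := by
  ext j l
  exact integral_sum_mul_of_indep hle₁ hle₂ hind (fun i => hX j i) (fun i => hY i l)
    (fun i => hXi j i) (fun i => hYi i l)

lemma integral_dotProduct_mulVec_of_indep (hle₁ : m₁ ≤ mΩ) (hle₂ : m₂ ≤ mΩ)
    (hind : Indep m₁ m₂ P) {x y : Ω → ι → ℝ} {F : Ω → Matrix ι ι ℝ}
    (hx : ∀ j, Measurable[m₁] fun ω => x ω j) (hy : ∀ l, Measurable[m₁] fun ω => y ω l)
    (hF : ∀ j l, Measurable[m₂] fun ω => F ω j l)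
    (hxyi : ∀ j l, Integrable (fun ω => x ω j * y ω l) P)
    (hFi : ∀ j l, Integrable (fun ω => F ω j l) P) :
    ∫ ω, x ω ⬝ᵥ (F ω *ᵥ y ω) ∂P = ∫ ω, x ω ⬝ᵥ (meanMatrix P F *ᵥ y ω) ∂P := by
  have hexpand : ∀ (M : Matrix ι ι ℝ) ω,
      x ω ⬝ᵥ (M *ᵥ y ω) = ∑ p : ι × ι, x ω p.1 * y ω p.2 * M p.1 p.2 := by
    intro M ω
    simp only [dotProduct, mulVec, Fintype.sum_prod_type, Finset.mul_sum]
    exact Finset.sum_congr rfl fun j _ => Finset.sum_congr rfl fun l _ => by ring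
  simp only [hexpand]
  calc ∫ ω, ∑ p : ι × ι, x ω p.1 * y ω p.2 * F ω p.1 p.2 ∂P
      = ∑ p : ι × ι, (∫ ω, x ω p.1 * y ω p.2 ∂P) * ∫ ω, F ω p.1 p.2 ∂P :=
        integral_sum_mul_of_indep hle₁ hle₂ hind (fun p => (hx p.1).mul (hy p.2))
          (fun p => hF p.1 p.2) (fun p => hxyi p.1 p.2) (fun p => hFi p.1 p.2)
    _ = ∫ ω, ∑ p : ι × ι, x ω p.1 * y ω p.2 * meanMatrix P F p.1 p.2 ∂P := by
        rw [integral_finsetSum _ fun p _ => (hxyi p.1 p.2).mul_const _]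
        exact Finset.sum_congr rfl fun p _ => (integral_mul_const _ _).symm

end Independence

section Stochastic

variable {ι : Type*} [Fintype ι]

lemma leftStochastic_iff_mem_colStochastic {M : Fin K → Fin K → ℝ} :
    LeftStochastic M ↔ Matrix.of M ∈ colStochastic ℝ (Fin K) :=
  mem_colStochastic_iff_sum.symm

lemma mulVec_mem_stdSimplex [DecidableEq ι] {M : Matrix ι ι ℝ} (hM : M ∈ colStochastic ℝ ι)
    {v : ι → ℝ} (hv : v ∈ stdSimplex ℝ ι) : M *ᵥ v ∈ stdSimplex ℝ ι :=
  ⟨nonneg_mulVec_of_mem_colStochastic hM hv.1, (sum_mulVec_of_mem_colStochastic hM).trans hv.2⟩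

lemma abs_le_one_of_mem_stdSimplex {x : ι → ℝ} (hx : x ∈ stdSimplex ℝ ι) (j : ι) :
    |x j| ≤ 1 := by
  obtain ⟨hx0, hx1⟩ := mem_Icc_of_mem_stdSimplex hx j
  exact abs_le.2 ⟨by linarith, hx1⟩

lemma abs_sub_le_one_of_mem_stdSimplex {x y : ι → ℝ} (hx : x ∈ stdSimplex ℝ ι)
    (hy : y ∈ stdSimplex ℝ ι) (j : ι) : |x j - y j| ≤ 1 := by
  obtain ⟨hx0, hx1⟩ := mem_Icc_of_mem_stdSimplex hx j
  obtain ⟨hy0, hy1⟩ := mem_Icc_of_mem_stdSimplex hy j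
  exact abs_le.2 ⟨by linarith, by linarith⟩

lemma sq_sub_le_of_mem_stdSimplex {x y : ι → ℝ} (hx : x ∈ stdSimplex ℝ ι)
    (hy : y ∈ stdSimplex ℝ ι) (j : ι) : (x j - y j) ^ 2 ≤ x j + y j := by
  obtain ⟨hx0, hx1⟩ := mem_Icc_of_mem_stdSimplex hx j
  obtain ⟨hy0, hy1⟩ := mem_Icc_of_mem_stdSimplex hy j
  nlinarith

end Stochastic

lemma abs_dotProduct_le_enorm' (u v : Fin K → ℝ) : |u ⬝ᵥ v| ≤ enorm' u * enorm' v := by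
  rw [enorm', enorm', ← Real.sqrt_mul (Finset.sum_nonneg fun j _ => sq_nonneg (u j)),
    ← Real.sqrt_sq_eq_abs]
  exact Real.sqrt_le_sqrt (Finset.sum_mul_sq_le_sq_mul_sq _ u v)

lemma enorm'_sub_le_two {x y : Fin K → ℝ} (hx : x ∈ stdSimplex ℝ (Fin K))
    (hy : y ∈ stdSimplex ℝ (Fin K)) : enorm' (x - y) ≤ 2 := by
  have hsum : ∑ j, (x j - y j) ^ 2 ≤ 2 ^ 2 :=
    calc ∑ j, (x j - y j) ^ 2 ≤ ∑ j, (x j + y j) :=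
          Finset.sum_le_sum fun j _ => sq_sub_le_of_mem_stdSimplex hx hy j
      _ = 2 := by rw [Finset.sum_add_distrib, hx.2, hy.2]; norm_num
      _ ≤ 2 ^ 2 := by norm_num
  exact (Real.sqrt_le_left (by norm_num)).2 hsum

noncomputable def lazy (α : ℝ) (M : Fin K → Fin K → ℝ) : Matrix (Fin K) (Fin K) ℝ :=
  α • 1 + (1 - α) • Matrix.of M

lemma lazy_apply (α : ℝ) (M : Fin K → Fin K → ℝ) (j l : Fin K) :
    lazy α M j l = α * (1 : Matrix (Fin K) (Fin K) ℝ) j l + (1 - α) * M j l := rfl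

lemma upd_eq_lazy_mulVec (α : ℝ) (M : Fin K → Fin K → ℝ) (v : Fin K → ℝ) :
    upd α M v = lazy α M *ᵥ v := by
  rw [lazy, add_mulVec, smul_mulVec, smul_mulVec, one_mulVec]
  rfl

lemma lazy_mem_colStochastic {α : ℝ} (hα0 : 0 ≤ α) (hα1 : α ≤ 1) {M : Fin K → Fin K → ℝ}
    (hM : LeftStochastic M) : lazy α M ∈ colStochastic ℝ (Fin K) :=
  convex_colStochastic (one_mem _) (leftStochastic_iff_mem_colStochastic.1 hM) hα0
    (sub_nonneg.2 hα1) (by ring)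

lemma lazy_pow_mulVec_of_fixed (α : ℝ) {A : Fin K → Fin K → ℝ} {π : Fin K → ℝ}
    (hπ : ∀ j, ∑ l, A j l * π l = π j) (s : ℕ) : lazy α A ^ s *ᵥ π = π := by
  have hfix : lazy α A *ᵥ π = π := by
    rw [← upd_eq_lazy_mulVec]
    ext j
    simp only [upd, hπ]
    ring
  induction s with
  | zero => simp
  | succ s ih => rw [pow_succ, ← mulVec_mulVec, hfix, ih]

section RandomProducts

variable {Ω : Type*} {mΩ : MeasurableSpace Ω} {P : Measure Ω}

variable (An : ℕ → Ω → Fin K → Fin K → ℝ)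

abbrev sigmaAlg (S : Set ℕ) : MeasurableSpace Ω :=
  ⨆ i ∈ S, MeasurableSpace.comap (An i) inferInstance

variable {An}

lemma sigmaAlg_le (hmeas : ∀ n, Measurable (An n)) (S : Set ℕ) : sigmaAlg An S ≤ mΩ :=
  iSup₂_le fun i _ => (hmeas i).comap_le

lemma indep_sigmaAlg (hmeas : ∀ n, Measurable (An n)) (hiid : iIndepFun An P) {S T : Set ℕ}
    (hST : Disjoint S T) : Indep (sigmaAlg An S) (sigmaAlg An T) P :=
  indep_iSup_of_disjoint (fun i => (hmeas i).comap_le) hiid.iIndep hST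

lemma measurable_sigmaAlg_apply {S : Set ℕ} {i : ℕ} (hi : i ∈ S) (j l : Fin K) :
    Measurable[sigmaAlg An S] fun ω => An i ω j l := by
  have hAi : Measurable[sigmaAlg An S] (An i) :=
    Measurable.of_comap_le (le_iSup₂ (f := fun i (_ : i ∈ S) =>
      MeasurableSpace.comap (An i) inferInstance) i hi)
  exact (measurable_pi_apply l).comp ((measurable_pi_apply j).comp hAi)

lemma measurable_lazy_apply (α : ℝ) {S : Set ℕ} {i : ℕ} (hi : i ∈ S) (j l : Fin K) :
    Measurable[sigmaAlg An S] fun ω => lazy α (An i ω) j l :=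
  measurable_const.add (measurable_const.mul (measurable_sigmaAlg_apply hi j l))

/-- `lazyProd α An m t ω = lazy α (An (m + t) ω) * ⋯ * lazy α (An (m + 1) ω)`. -/
noncomputable def lazyProd (α : ℝ) (An : ℕ → Ω → Fin K → Fin K → ℝ) (m : ℕ) :
    ℕ → Ω → Matrix (Fin K) (Fin K) ℝ
  | 0 => fun _ => 1
  | t + 1 => fun ω => lazy α (An (m + t + 1) ω) * lazyProd α An m t ω

lemma measurable_lazyProd_apply {α : ℝ} (m t : ℕ) {S : Set ℕ} (hS : Set.Ioc m (m + t) ⊆ S)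
    (j l : Fin K) : Measurable[sigmaAlg An S] fun ω => lazyProd α An m t ω j l := by
  induction t generalizing j with
  | zero => exact measurable_const
  | succ t ih =>
    simp only [lazyProd, mul_apply]
    refine Finset.measurable_sum _ fun r _ => (measurable_lazy_apply α (hS ?_) j r).mul
      (ih ((Set.Ioc_subset_Ioc_right (by omega)).trans hS) r)
    exact ⟨by omega, by omega⟩

lemma lazyProd_mem_colStochastic {α : ℝ} (hα0 : 0 ≤ α) (hα1 : α ≤ 1)
    (hval : ∀ n ω, LeftStochastic (An n ω)) (m t : ℕ) (ω : Ω) :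
    lazyProd α An m t ω ∈ colStochastic ℝ (Fin K) := by
  induction t with
  | zero => exact one_mem _
  | succ t ih => exact mul_mem (lazy_mem_colStochastic hα0 hα1 (hval _ ω)) ih

lemma meanMatrix_lazy [IsProbabilityMeasure P] (hmeas : ∀ n, Measurable (An n))
    (hval : ∀ n ω, LeftStochastic (An n ω)) {A : Fin K → Fin K → ℝ}
    (hmean : ∀ n l k, ∫ ω, An n ω l k ∂P = A l k) (α : ℝ) (i : ℕ) :
    meanMatrix P (fun ω => lazy α (An i ω)) = lazy α A := by
  ext j l
  have hint : Integrable (fun ω => An i ω j l) P :=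
    integrable_apply_of_mem_colStochastic (X := fun ω => Matrix.of (An i ω))
      (fun ω => leftStochastic_iff_mem_colStochastic.1 (hval i ω))
      ((measurable_pi_apply l).comp ((measurable_pi_apply j).comp (hmeas i)))
  simp only [meanMatrix, of_apply, lazy_apply]
  rw [integral_add (integrable_const _) (hint.const_mul _), integral_const, integral_const_mul,
    hmean]
  simp

lemma meanMatrix_lazyProd [IsProbabilityMeasure P] (hmeas : ∀ n, Measurable (An n))
    (hiid : iIndepFun An P) (hval : ∀ n ω, LeftStochastic (An n ω)) {A : Fin K → Fin K → ℝ}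
    (hmean : ∀ n l k, ∫ ω, An n ω l k ∂P = A l k) {α : ℝ} (hα0 : 0 ≤ α) (hα1 : α ≤ 1)
    (m t : ℕ) :
    meanMatrix P (lazyProd α An m t) = lazy α A ^ t := by
  induction t with
  | zero => ext j l; simp [meanMatrix, lazyProd]
  | succ t ih =>
    have hdisj : Disjoint ({m + t + 1} : Set ℕ) (Set.Ioc m (m + t)) := by simp
    have hint : ∀ j l, Integrable (fun ω => lazy α (An (m + t + 1) ω) j l) P := fun j l =>
      integrable_apply_of_mem_colStochastic
        (fun ω => lazy_mem_colStochastic hα0 hα1 (hval _ ω))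
        ((measurable_lazy_apply α rfl j l).mono (sigmaAlg_le hmeas _) le_rfl)
    have hint' : ∀ j l, Integrable (fun ω => lazyProd α An m t ω j l) P := fun j l =>
      integrable_apply_of_mem_colStochastic (lazyProd_mem_colStochastic hα0 hα1 hval m t)
        ((measurable_lazyProd_apply m t subset_rfl j l).mono (sigmaAlg_le hmeas _) le_rfl)
    rw [show lazyProd α An m (t + 1) = (fun ω => lazy α (An (m + t + 1) ω)) * lazyProd α An m t
      from rfl, meanMatrix_mul_of_indep (sigmaAlg_le hmeas _) (sigmaAlg_le hmeas _)
      (indep_sigmaAlg hmeas hiid hdisj) (measurable_lazy_apply α rfl)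
      (measurable_lazyProd_apply m t subset_rfl) hint hint', meanMatrix_lazy hmeas hval hmean,
      ih, pow_succ']

end RandomProducts

section Walk

variable {Ω : Type*} {An : ℕ → Ω → Fin K → Fin K → ℝ} {α : ℝ} {w : ℕ → Ω → Fin K → ℝ}

lemma eq_lazyProd_mulVec (hwrec : ∀ n ω, w (n + 1) ω = upd α (An (n + 1) ω) (w n ω))
    (m t : ℕ) (ω : Ω) : w (m + t) ω = lazyProd α An m t ω *ᵥ w m ω := by
  induction t with
  | zero => simp [lazyProd]
  | succ t ih => rw [← add_assoc, hwrec, ih, upd_eq_lazy_mulVec, mulVec_mulVec]; rfl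

lemma eq_lazyProd_zero_mulVec (hwrec : ∀ n ω, w (n + 1) ω = upd α (An (n + 1) ω) (w n ω))
    (n : ℕ) (ω : Ω) : w n ω = lazyProd α An 0 n ω *ᵥ w 0 ω := by
  simpa using eq_lazyProd_mulVec hwrec 0 n ω

lemma walk_mem_stdSimplex (hα0 : 0 ≤ α) (hα1 : α ≤ 1) (hval : ∀ n ω, LeftStochastic (An n ω))
    (hw0 : ∀ ω, w 0 ω ∈ stdSimplex ℝ (Fin K))
    (hwrec : ∀ n ω, w (n + 1) ω = upd α (An (n + 1) ω) (w n ω)) (n : ℕ) (ω : Ω) :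
    w n ω ∈ stdSimplex ℝ (Fin K) := by
  rw [eq_lazyProd_zero_mulVec hwrec]
  exact mulVec_mem_stdSimplex (lazyProd_mem_colStochastic hα0 hα1 hval 0 n ω) (hw0 ω)

lemma measurable_walk_apply {w₀ : Fin K → ℝ} (hw0 : ∀ ω, w 0 ω = w₀)
    (hwrec : ∀ n ω, w (n + 1) ω = upd α (An (n + 1) ω) (w n ω)) (n : ℕ) (j : Fin K) :
    Measurable[sigmaAlg An (Set.Iic n)] fun ω => w n ω j := by
  have hw : (fun ω => w n ω j) = fun ω => ∑ l, lazyProd α An 0 n ω j l * w₀ l := by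
    funext ω
    rw [eq_lazyProd_zero_mulVec hwrec n ω, hw0 ω]
    rfl
  rw [hw]
  exact Finset.measurable_sum _ fun l _ => (measurable_lazyProd_apply 0 n
    (by rw [zero_add]; exact Set.Ioc_subset_Iic_self) j l).mul_const _

end Walk

section Correlation

variable {Ω : Type*} {mΩ : MeasurableSpace Ω} {P : Measure Ω} [IsProbabilityMeasure P]
  {An : ℕ → Ω → Fin K → Fin K → ℝ} {A : Fin K → Fin K → ℝ} {α : ℝ} {π w₀ : Fin K → ℝ}
  {w : ℕ → Ω → Fin K → ℝ}

lemma integral_dotProduct_walk_eq_lazy_pow (hmeas : ∀ n, Measurable (An n)) (hiid : iIndepFun An P)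
    (hval : ∀ n ω, LeftStochastic (An n ω)) (hmean : ∀ n l k, ∫ ω, An n ω l k ∂P = A l k)
    (hα0 : 0 ≤ α) (hα1 : α ≤ 1) (hπ : π ∈ stdSimplex ℝ (Fin K))
    (hw₀ : w₀ ∈ stdSimplex ℝ (Fin K)) (hw0 : ∀ ω, w 0 ω = w₀)
    (hwrec : ∀ n ω, w (n + 1) ω = upd α (An (n + 1) ω) (w n ω)) (m s : ℕ) :
    ∫ ω, (w m ω - π) ⬝ᵥ w (m + s) ω ∂P = ∫ ω, (w m ω - π) ⬝ᵥ (lazy α A ^ s *ᵥ w m ω) ∂P := by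
  have hsimplex := walk_mem_stdSimplex hα0 hα1 hval (fun ω => hw0 ω ▸ hw₀) hwrec m
  have hwm := measurable_walk_apply hw0 hwrec m
  have hle := sigmaAlg_le hmeas (Set.Iic m)
  simp only [eq_lazyProd_mulVec hwrec m s]
  rw [← meanMatrix_lazyProd hmeas hiid hval hmean hα0 hα1 m s]
  exact integral_dotProduct_mulVec_of_indep hle (sigmaAlg_le hmeas _)
    (indep_sigmaAlg hmeas hiid (Set.Iic_disjoint_Ioi le_rfl)) (fun j => (hwm j).sub_const _) hwm
    (measurable_lazyProd_apply m s Set.Ioc_subset_Ioi_self)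
    (fun j l => integrable_mul_of_abs_le_one (((hwm j).sub_const _).mono hle le_rfl)
      ((hwm l).mono hle le_rfl) (fun ω => abs_sub_le_one_of_mem_stdSimplex (hsimplex ω) hπ j)
      (fun ω => abs_le_one_of_mem_stdSimplex (hsimplex ω) l))
    (fun j l => integrable_apply_of_mem_colStochastic
      (lazyProd_mem_colStochastic hα0 hα1 hval m s)
      ((measurable_lazyProd_apply m s subset_rfl j l).mono (sigmaAlg_le hmeas _) le_rfl))

lemma integral_deviation_dotProduct_eq (hmeas : ∀ n, Measurable (An n)) (hiid : iIndepFun An P)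
    (hval : ∀ n ω, LeftStochastic (An n ω)) (hA : LeftStochastic A)
    (hmean : ∀ n l k, ∫ ω, An n ω l k ∂P = A l k)
    (hα0 : 0 ≤ α) (hα1 : α ≤ 1) (hπ : π ∈ stdSimplex ℝ (Fin K))
    (hπfix : ∀ j, ∑ l, A j l * π l = π j) (hw₀ : w₀ ∈ stdSimplex ℝ (Fin K))
    (hw0 : ∀ ω, w 0 ω = w₀) (hwrec : ∀ n ω, w (n + 1) ω = upd α (An (n + 1) ω) (w n ω))
    (m s : ℕ) :
    ∫ ω, ∑ j, (w m ω j - π j) * (w (m + s) ω j - π j) ∂P =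
      ∫ ω, (w m ω - π) ⬝ᵥ (lazy α A ^ s *ᵥ (w m ω - π)) ∂P := by
  have hsimplex := walk_mem_stdSimplex hα0 hα1 hval (fun ω => hw0 ω ▸ hw₀) hwrec
  have hwm : ∀ n j, Measurable fun ω => w n ω j := fun n j =>
    (measurable_walk_apply hw0 hwrec n j).mono (sigmaAlg_le hmeas _) le_rfl
  have hint : ∀ v : Ω → Fin K → ℝ, (∀ j, Measurable fun ω => v ω j) →
      (∀ ω, v ω ∈ stdSimplex ℝ (Fin K)) → Integrable (fun ω => (w m ω - π) ⬝ᵥ v ω) P :=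
    fun v hv hv1 => integrable_dotProduct_of_abs_le_one (fun j => (hwm m j).sub_const _) hv
      (fun ω => abs_sub_le_one_of_mem_stdSimplex (hsimplex m ω) hπ)
      (fun ω => abs_le_one_of_mem_stdSimplex (hv1 ω))
  have hπint := hint (fun _ => π) (fun _ => measurable_const) fun _ => hπ
  have hBw : ∀ j, Measurable fun ω => (lazy α A ^ s *ᵥ w m ω) j := fun j => by
    simp only [mulVec, dotProduct]
    exact Finset.measurable_sum _ fun l _ => (hwm m l).const_mul _
  have hBw1 : ∀ ω, lazy α A ^ s *ᵥ w m ω ∈ stdSimplex ℝ (Fin K) := fun ω =>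
    mulVec_mem_stdSimplex (pow_mem (lazy_mem_colStochastic hα0 hα1 hA) s) (hsimplex m ω)
  calc ∫ ω, ∑ j, (w m ω j - π j) * (w (m + s) ω j - π j) ∂P
      = ∫ ω, ((w m ω - π) ⬝ᵥ w (m + s) ω - (w m ω - π) ⬝ᵥ π) ∂P := by
        simp only [dotProduct, mul_sub, Finset.sum_sub_distrib, Pi.sub_apply]
    _ = ∫ ω, (w m ω - π) ⬝ᵥ w (m + s) ω ∂P - ∫ ω, (w m ω - π) ⬝ᵥ π ∂P :=
        integral_sub (hint _ (hwm _) (hsimplex _)) hπint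
    _ = ∫ ω, (w m ω - π) ⬝ᵥ (lazy α A ^ s *ᵥ w m ω) ∂P - ∫ ω, (w m ω - π) ⬝ᵥ π ∂P := by
        rw [integral_dotProduct_walk_eq_lazy_pow hmeas hiid hval hmean hα0 hα1 hπ hw₀ hw0 hwrec]
    _ = ∫ ω, ((w m ω - π) ⬝ᵥ (lazy α A ^ s *ᵥ w m ω) - (w m ω - π) ⬝ᵥ π) ∂P :=
        (integral_sub (hint _ hBw hBw1) hπint).symm
    _ = ∫ ω, (w m ω - π) ⬝ᵥ (lazy α A ^ s *ᵥ (w m ω - π)) ∂P := by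
        simp only [mulVec_sub, lazy_pow_mulVec_of_fixed α hπfix, dotProduct_sub]

end Correlation

theorem statement3_general
    {Ω : Type*} [MeasurableSpace Ω] (P : Measure Ω) [IsProbabilityMeasure P]
    (A : Fin K → Fin K → ℝ) (hA : LeftStochastic A)
    (π : Fin K → ℝ) (hπpos : ∀ j, 0 < π j) (hπsum : ∑ j, π j = 1)
    (hπfix : ∀ j, ∑ l, A j l * π l = π j)
    (An : ℕ → Ω → Fin K → Fin K → ℝ) (hmeas : ∀ n, Measurable (An n))
    (hval : ∀ n ω, LeftStochastic (An n ω) ∧ ZeroOne (An n ω))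
    (hiid : iIndepFun An P)
    (hmean : ∀ n l k, ∫ ω, An n ω l k ∂P = A l k)
    (α : ℝ) (hα0 : 0 ≤ α) (hα1 : α < 1) (k : Fin K)
    (w : ℕ → Ω → Fin K → ℝ)
    (hw0 : ∀ ω, w 0 ω = fun j => if j = k then (1 : ℝ) else 0)
    (hwrec : ∀ n ω, w (n + 1) ω = upd α (An (n + 1) ω) (w n ω))
    (C ρ : ℝ)
    (hmix : ∀ v : Fin K → ℝ, (∀ j, 0 ≤ v j) → (∑ j, v j = 1) → ∀ m : ℕ,
      enorm' (((α • (1 : Matrix (Fin K) (Fin K) ℝ) + (1 - α) • Matrix.of A) ^ m).mulVec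
          (fun l => v l - π l)) ≤ C * ρ ^ m) :
    ∀ m n : ℕ, m ≤ n →
      ∫ ω, ∑ j, (w m ω j - π j) * (w n ω j - π j) ∂P ≤ 2 * C * ρ ^ (n - m) := by
  intro m n hmn
  obtain ⟨s, rfl⟩ := Nat.exists_eq_add_of_le hmn
  have hπ : π ∈ stdSimplex ℝ (Fin K) := ⟨fun j => (hπpos j).le, hπsum⟩
  have hw₀ : (fun j => if j = k then (1 : ℝ) else 0) ∈ stdSimplex ℝ (Fin K) := by
    simpa only [eq_comm] using ite_eq_mem_stdSimplex ℝ k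
  have hstoch : ∀ n ω, LeftStochastic (An n ω) := fun n ω => (hval n ω).1
  have hsimplex := walk_mem_stdSimplex hα0 hα1.le hstoch (fun ω => hw0 ω ▸ hw₀) hwrec m
  have hwm : Measurable (w m) := measurable_pi_lambda _ fun j =>
    (measurable_walk_apply hw0 hwrec m j).mono (sigmaAlg_le hmeas _) le_rfl
  have hquad : ∀ ω, |(w m ω - π) ⬝ᵥ (lazy α A ^ s *ᵥ (w m ω - π))| ≤ 2 * C * ρ ^ s := fun ω =>
    calc _ ≤ enorm' (w m ω - π) * enorm' (lazy α A ^ s *ᵥ (w m ω - π)) :=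
          abs_dotProduct_le_enorm' _ _
      _ ≤ 2 * (C * ρ ^ s) := mul_le_mul (enorm'_sub_le_two (hsimplex ω) hπ)
          (hmix _ (hsimplex ω).1 (hsimplex ω).2 s) (Real.sqrt_nonneg _) zero_le_two
      _ = 2 * C * ρ ^ s := by ring
  rw [Nat.add_sub_cancel_left, integral_deviation_dotProduct_eq hmeas hiid hstoch hA hmean hα0
    hα1.le hπ hπfix hw₀ hw0 hwrec]
  exact integral_le_of_abs_le ((by fun_prop : Continuous fun v : Fin K → ℝ =>
    (v - π) ⬝ᵥ (lazy α A ^ s *ᵥ (v - π))).measurable.comp hwm).aestronglyMeasurable hquad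

/-- under the geometric mixing bound for `(αI + (1-α)A)`, the correlation of
the deviations of `w_m` and `w_n` from the Perron vector `π` satisfies
`E⟨w_m − π, w_n − π⟩ ≤ 2 C ρ^{n-m}` for `m ≤ n`. -/
theorem statement3 [NeZero K]
    {Ω : Type*} [MeasurableSpace Ω] (P : Measure Ω) [IsProbabilityMeasure P]
    (A : Fin K → Fin K → ℝ) (hA : LeftStochastic A) (hAsc : StronglyConnected A)
    (π : Fin K → ℝ) (hπpos : ∀ j, 0 < π j) (hπsum : ∑ j, π j = 1)
    (hπfix : ∀ j, ∑ l, A j l * π l = π j)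
    (An : ℕ → Ω → Fin K → Fin K → ℝ) (hmeas : ∀ n, Measurable (An n))
    (hval : ∀ n ω, LeftStochastic (An n ω) ∧ ZeroOne (An n ω))
    (hiid : iIndepFun An P)
    (hid : ∀ n, IdentDistrib (An n) (An 1) P P)
    (hmean : ∀ n l k, ∫ ω, An n ω l k ∂P = A l k)
    (α : ℝ) (hα0 : 0 ≤ α) (hα1 : α < 1) (k : Fin K)
    (w : ℕ → Ω → Fin K → ℝ)
    (hw0 : ∀ ω, w 0 ω = fun j => if j = k then (1 : ℝ) else 0)
    (hwrec : ∀ n ω, w (n + 1) ω = upd α (An (n + 1) ω) (w n ω))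
    (C ρ : ℝ) (hC : 0 < C) (hρ0 : 0 < ρ) (hρ1 : ρ < 1)
    (hmix : ∀ v : Fin K → ℝ, (∀ j, 0 ≤ v j) → (∑ j, v j = 1) → ∀ m : ℕ,
      enorm' (((α • (1 : Matrix (Fin K) (Fin K) ℝ) + (1 - α) • Matrix.of A) ^ m).mulVec
          (fun l => v l - π l)) ≤ C * ρ ^ m) :
    ∀ m n : ℕ, m ≤ n →
      ∫ ω, ∑ j, (w m ω j - π j) * (w n ω j - π j) ∂P ≤ 2 * C * ρ ^ (n - m) :=
  statement3_general P A hA π hπpos hπsum hπfix An hmeas hval hiid hmean α hα0 hα1 k w hw0 hwrec C ρ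
    hmix
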